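/- Splitting theorem for ground programs (the result underlying Theorem 1 of the paper): let P be a ground ASP program and U a splitting set for P, i.e. a set of ground atoms such that every rule of P having a head atom in U has all of its atoms in U. Let b_U(P) be the bottom of P (the rules of P all of whose atoms are in U), and for a set of atoms X ⊆ U let e_U(P ∖ b_U(P), X) be the partial evaluation of the top: delete every rule of P ∖ b_U(P) that has a positive body literal over an atom of U not in X or a negative body literal over an atom of U that is in X, and delete all remaining body literals over atoms of U from the surviving rules. Then an interpretation whose set of true atoms is A is a stable model of P if and only if A = X ∪ Y where X is the set of true atoms of a stable model of b_U(P), Y is the set of true atoms of a stable model of e_U(P ∖ b_U(P), X), and X = A ∩ U. -/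

import Mathlib

/- A formalization of Answer Set Programming (ASP):
   non-ground programs, grounding, interpretations, stable models,
   dependency graphs, stratification, compilable subprograms,
   and splitting sets for ground programs. -/

namespace ASP

/-- A term is a variable or a constant. -/
inductive Term where
  | var : ℕ → Term
  | const : ℕ → Term

/-- A (non-ground) atom `p(t1,...,tk)`. -/
structure Atom where
  pred : ℕ
  args : List Term

/-- A literal: an atom or a negated atom. -/
inductive Lit where
  | pos : Atom → Lit
  | neg : Atom → Lit

/-- A rule `h1 | ... | hn :- b1, ..., bm`. -/
structure Rule where
  head : List Atom
  body : List Lit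

/-- An ASP program is a set of rules (finiteness is stated as a hypothesis). -/
abbrev Program := Set Rule

/-- A ground atom. -/
structure GAtom where
  pred : ℕ
  args : List ℕ

/-- A ground literal. -/
inductive GLit where
  | pos : GAtom → GLit
  | neg : GAtom → GLit

/-- A ground rule. -/
structure GRule where
  head : List GAtom
  body : List GLit

/-- A ground program. -/
abbrev GProgram := Set GRule

/-- The atom of a literal. -/
def Lit.atom : Lit → Atom
  | .pos a => a
  | .neg a => a

/-- The atom of a ground literal. -/
def GLit.atom : GLit → GAtom
  | .pos a => a
  | .neg a => a

/-- Whether a ground literal is positive. -/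
def GLit.isPos : GLit → Bool
  | .pos _ => true
  | .neg _ => false

/-- The atoms occurring in a rule (head or body). -/
def Rule.atoms (r : Rule) : Set Atom :=
  {a | a ∈ r.head ∨ ∃ l ∈ r.body, l.atom = a}

/-- The variables occurring in a rule. -/
def Rule.vars (r : Rule) : Set ℕ :=
  {v | ∃ a ∈ r.atoms, Term.var v ∈ a.args}

/-- The Herbrand universe of a program: the constants occurring in it. -/
def herbrandU (π : Program) : Set ℕ :=
  {c | ∃ r ∈ π, ∃ a ∈ r.atoms, Term.const c ∈ a.args}

/-- The predicate symbols occurring in a program. -/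
def preds (π : Program) : Set ℕ :=
  {p | ∃ r ∈ π, ∃ a ∈ r.atoms, a.pred = p}

/-- The predicate symbols occurring in heads of rules of a program. -/
def headPreds (π : Program) : Set ℕ :=
  {p | ∃ r ∈ π, ∃ a ∈ r.head, a.pred = p}

/-- The Herbrand base of a program: ground atoms built from predicate
    symbols of the program and constants of its Herbrand universe. -/
def herbrandB (π : Program) : Set GAtom :=
  {ga | ga.pred ∈ preds π ∧ ∀ c ∈ ga.args, c ∈ herbrandU π}

/-- Applying a substitution (from variables to constants) to a term. -/
def Term.subst (σ : ℕ → ℕ) : Term → ℕ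
  | .var v => σ v
  | .const c => c

/-- Applying a substitution to an atom. -/
def Atom.ground (σ : ℕ → ℕ) (a : Atom) : GAtom :=
  ⟨a.pred, a.args.map (Term.subst σ)⟩

/-- Applying a substitution to a literal. -/
def Lit.ground (σ : ℕ → ℕ) : Lit → GLit
  | .pos a => .pos (a.ground σ)
  | .neg a => .neg (a.ground σ)

/-- Applying a substitution to a rule. -/
def Rule.ground (σ : ℕ → ℕ) (r : Rule) : GRule :=
  ⟨r.head.map (Atom.ground σ), r.body.map (Lit.ground σ)⟩

/-- `Ground(π)`: all ground instances of rules of `π`, substituting the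
    variables by constants of the Herbrand universe of `π`. -/
def groundProg (π : Program) : GProgram :=
  {gr | ∃ r ∈ π, ∃ σ : ℕ → ℕ, (∀ v ∈ r.vars, σ v ∈ herbrandU π) ∧ gr = r.ground σ}

/-- `I⁺`: the set of atoms occurring positively in `I`. -/
def plus (I : Set GLit) : Set GAtom := {a | GLit.pos a ∈ I}

/-- An interpretation over a set `B` of ground atoms: a set of ground literals
    over `B` containing, for each `a ∈ B`, exactly one of `a` and `∼a`. -/
def IsInterp (B : Set GAtom) (I : Set GLit) : Prop :=
  (∀ l ∈ I, l.atom ∈ B) ∧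
  ∀ a ∈ B, (GLit.pos a ∈ I ∧ GLit.neg a ∉ I) ∨ (GLit.neg a ∈ I ∧ GLit.pos a ∉ I)

/-- `I` is a model of a ground program: whenever all body literals of a rule
    are true in `I`, some head atom is true in `I`. -/
def IsModelG (P : GProgram) (I : Set GLit) : Prop :=
  ∀ r ∈ P, (∀ l ∈ r.body, l ∈ I) → ∃ a ∈ r.head, GLit.pos a ∈ I

/-- The reduct `P^I`: delete rules containing a negative body literal `∼a`
    with `a ∈ I⁺`, and delete negative body literals from remaining rules. -/
def reductG (P : GProgram) (I : Set GLit) : GProgram :=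
  {r' | ∃ r ∈ P, (∀ a, GLit.neg a ∈ r.body → a ∉ plus I) ∧
        r' = ⟨r.head, r.body.filter GLit.isPos⟩}

/-- `I` is a stable model (answer set) of the non-ground program `π`. -/
def IsAnswerSet (π : Program) (I : Set GLit) : Prop :=
  IsInterp (herbrandB π) I ∧ IsModelG (groundProg π) I ∧
  ¬ ∃ J, IsInterp (herbrandB π) J ∧ IsModelG (reductG (groundProg π) I) J ∧
         plus J ⊂ plus I

/-- Positive edge of the dependency graph `DG_π`: from a predicate of a
    positive body literal to a predicate of the head. -/
def posEdge (π : Program) (p q : ℕ) : Prop :=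
  ∃ r ∈ π, (∃ a, Lit.pos a ∈ r.body ∧ a.pred = p) ∧ ∃ b ∈ r.head, b.pred = q

/-- Negative edge of the dependency graph `DG_π`: from a predicate of a
    negative body literal to a predicate of the head, or between (the
    predicates of) two distinct atom occurrences in a disjunctive head. -/
def negEdge (π : Program) (p q : ℕ) : Prop :=
  (∃ r ∈ π, (∃ a, Lit.neg a ∈ r.body ∧ a.pred = p) ∧ ∃ b ∈ r.head, b.pred = q) ∨
  (∃ r ∈ π, ∃ i j : Fin r.head.length, i ≠ j ∧
      (r.head.get i).pred = p ∧ (r.head.get j).pred = q)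

/-- Any edge of the dependency graph. -/
def edge (π : Program) (p q : ℕ) : Prop := posEdge π p q ∨ negEdge π p q

/-- `π` is stratified iff `DG_π` has no cycle containing a negative edge. -/
def Stratified (π : Program) : Prop :=
  ¬ ∃ p q, negEdge π p q ∧ Relation.ReflTransGen (edge π) q p

/-- `λ` is compilable w.r.t. `π`: `λ ⊆ π`, `λ` is stratified, and no predicate
    occurring in a head of `λ` occurs anywhere in `π ∖ λ`. -/
def Compilable (π lam : Program) : Prop :=
  lam ⊆ π ∧ Stratified lam ∧ ∀ p ∈ headPreds lam, p ∉ preds (π \ lam)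

/-- A ground atom viewed as a (non-ground) atom. -/
def GAtom.toAtom (a : GAtom) : Atom := ⟨a.pred, a.args.map Term.const⟩

/-- `{f. | f ∈ S}`: the program consisting of each atom of `S` as a fact. -/
def factsProg (S : Set GAtom) : Program :=
  {r | ∃ a ∈ S, r = ⟨[a.toAtom], []⟩}

/-- The atoms occurring in a ground rule (head or body). -/
def GRule.atoms (r : GRule) : Set GAtom :=
  {a | a ∈ r.head ∨ ∃ l ∈ r.body, l.atom = a}

/-- The Herbrand base of a ground program: the atoms occurring in it. -/
def gAtoms (P : GProgram) : Set GAtom :=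
  {a | ∃ r ∈ P, a ∈ r.atoms}

/-- `I` is a stable model of the ground program `P`. -/
def IsStableG (P : GProgram) (I : Set GLit) : Prop :=
  IsInterp (gAtoms P) I ∧ IsModelG P I ∧
  ¬ ∃ J, IsInterp (gAtoms P) J ∧ IsModelG (reductG P I) J ∧ plus J ⊂ plus I

/-- Positive edge of the dependency graph of a ground program. -/
def posEdgeG (P : GProgram) (p q : ℕ) : Prop :=
  ∃ r ∈ P, (∃ a, GLit.pos a ∈ r.body ∧ a.pred = p) ∧ ∃ b ∈ r.head, b.pred = q

/-- Negative edge of the dependency graph of a ground program. -/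
def negEdgeG (P : GProgram) (p q : ℕ) : Prop :=
  ∃ r ∈ P, (∃ a, GLit.neg a ∈ r.body ∧ a.pred = p) ∧ ∃ b ∈ r.head, b.pred = q

/-- A ground program is stratified iff its dependency graph has no cycle
    containing a negative edge. -/
def StratifiedG (P : GProgram) : Prop :=
  ¬ ∃ p q, negEdgeG P p q ∧
      Relation.ReflTransGen (fun x y => posEdgeG P x y ∨ negEdgeG P x y) q p

/-- `U` is a splitting set for `P`: every rule with a head atom in `U`
    has all of its atoms in `U`. -/
def splittingSet (P : GProgram) (U : Set GAtom) : Prop :=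
  ∀ r ∈ P, (∃ a ∈ r.head, a ∈ U) → ∀ a ∈ r.atoms, a ∈ U

/-- `b_U(P)`: the rules of `P` all of whose atoms are in `U`. -/
def bottomProg (P : GProgram) (U : Set GAtom) : GProgram :=
  {r | r ∈ P ∧ ∀ a ∈ r.atoms, a ∈ U}

open Classical in
/-- Remove from a list of ground literals those whose atom is in `U`. -/
noncomputable def removeU (U : Set GAtom) : List GLit → List GLit
  | [] => []
  | l :: ls => if l.atom ∈ U then removeU U ls else l :: removeU U ls

/-- `e_U(P, X)`: partial evaluation of `P` w.r.t. `U` and `X ⊆ U`: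
    delete every rule with a positive body literal over an atom of `U` not in
    `X`, or a negative body literal over an atom of `U` in `X`; delete all
    remaining body literals over atoms of `U` from the surviving rules. -/
def topEval (P : GProgram) (U X : Set GAtom) : GProgram :=
  {r' | ∃ r ∈ P,
    (∀ a, GLit.pos a ∈ r.body → a ∈ U → a ∈ X) ∧
    (∀ a, GLit.neg a ∈ r.body → a ∈ U → a ∉ X) ∧
    r' = ⟨r.head, removeU U r.body⟩}

end ASP

open ASP

/-! Stable models can be handled at the level of sets of atoms: `A` is stable for `P` iff it
satisfies every rule of `P` and no proper subset of `A` satisfies every rule of the reduct `P^A`.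
Both conditions split along a splitting set `U`. A rule of the bottom mentions only atoms of `U`,
so it sees only `A ∩ U`. A rule outside the bottom has its head outside `U`; if its literals over
`U` agree with `A ∩ U` it behaves exactly like its partial evaluation on `A \ U`, and otherwise its
body is false, so it is satisfied vacuously. Hence a smaller model of the reduct of `P` restricts
to a smaller model of the reduct of the bottom or of the top, and conversely. -/

namespace ASP

/-- `S` satisfies the rule `r` of the reduct w.r.t. `A`; for `S = A` this says that `A`
satisfies `r`. -/
def GRule.ReductSat (A S : Set GAtom) (r : GRule) : Prop :=
  (∀ a, GLit.neg a ∈ r.body → a ∉ A) → (∀ a, GLit.pos a ∈ r.body → a ∈ S) →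
    ∃ h ∈ r.head, h ∈ S

def IsStableSet (Q : GProgram) (A : Set GAtom) : Prop :=
  (∀ r ∈ Q, r.ReductSat A A) ∧ ∀ S ⊆ A, (∀ r ∈ Q, r.ReductSat A S) → S = A

section Interpretations

def interpOf (C S : Set GAtom) : Set GLit :=
  {l | match l with
       | .pos a => a ∈ C ∧ a ∈ S
       | .neg a => a ∈ C ∧ a ∉ S}

theorem plus_interpOf (C S : Set GAtom) : plus (interpOf C S) = C ∩ S := rfl

theorem isInterp_interpOf (C S : Set GAtom) : IsInterp C (interpOf C S) := by
  refine ⟨fun l hl => ?_, fun a ha => ?_⟩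
  · cases l <;> exact hl.1
  · by_cases h : a ∈ S
    · exact Or.inl ⟨⟨ha, h⟩, fun hc => hc.2 h⟩
    · exact Or.inr ⟨⟨ha, h⟩, fun hc => h hc.2⟩

variable {C : Set GAtom} {J : Set GLit}

theorem IsInterp.plus_subset (hJ : IsInterp C J) : plus J ⊆ C :=
  fun a ha => hJ.1 (GLit.pos a) ha

theorem IsInterp.neg_mem_iff (hJ : IsInterp C J) {a : GAtom} (ha : a ∈ C) :
    GLit.neg a ∈ J ↔ a ∉ plus J := by
  rcases hJ.2 a ha with ⟨hp, hn⟩ | ⟨hn, hp⟩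
  · exact ⟨fun h => absurd h hn, fun h => absurd hp h⟩
  · exact ⟨fun _ => hp, fun _ => hn⟩

end Interpretations

section StableSets

variable {Q : GProgram}

theorem isModelG_reductG_iff {J K : Set GLit} :
    IsModelG (reductG Q J) K ↔ ∀ r ∈ Q, r.ReductSat (plus J) (plus K) := by
  constructor
  · intro h r hr hneg hpos
    refine h ⟨r.head, r.body.filter GLit.isPos⟩ ⟨r, hr, hneg, rfl⟩ fun l hl => ?_
    obtain ⟨hl, hlpos⟩ := List.mem_filter.1 hl
    cases l with
    | pos a => exact hpos a hl
    | neg a => simp [GLit.isPos] at hlpos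
  · rintro h r' ⟨r, hr, hneg, rfl⟩ hbody
    exact h r hr hneg fun a ha => hbody (GLit.pos a) (List.mem_filter.2 ⟨ha, rfl⟩)

theorem isModelG_iff {J : Set GLit} (hJ : IsInterp (gAtoms Q) J) :
    IsModelG Q J ↔ ∀ r ∈ Q, r.ReductSat (plus J) (plus J) := by
  have hnegJ : ∀ r ∈ Q, ∀ a, GLit.neg a ∈ r.body → (GLit.neg a ∈ J ↔ a ∉ plus J) :=
    fun r hr a ha => hJ.neg_mem_iff ⟨r, hr, Or.inr ⟨_, ha, rfl⟩⟩
  constructor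
  · intro h r hr hneg hpos
    refine h r hr fun l hl => ?_
    cases l with
    | pos a => exact hpos a hl
    | neg a => exact (hnegJ r hr a hl).2 (hneg a hl)
  · intro h r hr hbody
    exact h r hr (fun a ha => (hnegJ r hr a ha).1 (hbody _ ha)) fun a ha => hbody _ ha

theorem isStableG_iff {J : Set GLit} (hJ : IsInterp (gAtoms Q) J) :
    IsStableG Q J ↔ IsStableSet Q (plus J) := by
  refine (and_iff_right hJ).trans (and_congr (isModelG_iff hJ) ⟨?_, ?_⟩)
  · intro hmin S hSJ hS
    by_contra hne
    have hSC : gAtoms Q ∩ S = S := Set.inter_eq_self_of_subset_right (hSJ.trans hJ.plus_subset)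
    refine hmin ⟨interpOf (gAtoms Q) S, isInterp_interpOf _ _, ?_, ?_⟩
    · rwa [isModelG_reductG_iff, plus_interpOf, hSC]
    · rw [plus_interpOf, hSC]
      exact hSJ.ssubset_of_ne hne
  · rintro hmin ⟨K, -, hK, hKJ⟩
    exact hKJ.ne (hmin _ hKJ.subset (isModelG_reductG_iff.1 hK))

theorem IsStableSet.exists_supporting_rule {A : Set GAtom} (hA : IsStableSet Q A) {a : GAtom}
    (ha : a ∈ A) : ∃ r ∈ Q, a ∈ r.head ∧ (∀ b, GLit.pos b ∈ r.body → b ∈ A) ∧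
      (∀ b, GLit.neg b ∈ r.body → b ∉ A) := by
  by_contra hunsupp
  push Not at hunsupp
  have hreduct : ∀ r ∈ Q, r.ReductSat A (A \ {a}) := by
    intro r hr hneg hpos
    obtain ⟨h, hh, hhA⟩ := hA.1 r hr hneg fun b hb => (hpos b hb).1
    refine ⟨h, hh, hhA, ?_⟩
    rintro rfl
    obtain ⟨b, hb, hbA⟩ := hunsupp r hr hh fun b hb => (hpos b hb).1
    exact hneg b hb hbA
  exact ((hA.2 _ Set.sdiff_subset hreduct).symm.subset ha).2 rfl

theorem IsStableSet.subset_gAtoms {A : Set GAtom} (hA : IsStableSet Q A) : A ⊆ gAtoms Q := by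
  intro a ha
  obtain ⟨r, hr, hhead, -⟩ := hA.exists_supporting_rule ha
  exact ⟨r, hr, Or.inl hhead⟩

theorem exists_isStableG_iff {A : Set GAtom} :
    (∃ I, IsStableG Q I ∧ plus I = A) ↔ IsStableSet Q A := by
  constructor
  · rintro ⟨I, hI, rfl⟩
    exact (isStableG_iff hI.1).1 hI
  · intro hA
    have hplus : plus (interpOf (gAtoms Q) A) = A :=
      Set.inter_eq_self_of_subset_right hA.subset_gAtoms
    refine ⟨_, (isStableG_iff (isInterp_interpOf _ _)).2 ?_, hplus⟩
    rwa [hplus]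

end StableSets

theorem mem_removeU {U : Set GAtom} {l : GLit} {L : List GLit} :
    l ∈ removeU U L ↔ l ∈ L ∧ l.atom ∉ U := by
  induction L with
  | nil => simp [removeU]
  | cons l' L ih => by_cases h : l'.atom ∈ U <;> simp [removeU, h, ih] <;> aesop

namespace GRule

/-- `r` is not deleted by the partial evaluation `topEval · U X`. -/
def AgreesOn (U X : Set GAtom) (r : GRule) : Prop :=
  (∀ a, GLit.pos a ∈ r.body → a ∈ U → a ∈ X) ∧ (∀ a, GLit.neg a ∈ r.body → a ∈ U → a ∉ X)

variable {r : GRule} {U A S : Set GAtom}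

theorem reductSat_of_reductSat_self (hr : r.ReductSat A A) (hSA : S ⊆ A)
    (hhead : ∀ h ∈ r.head, h ∈ A → h ∈ S) : r.ReductSat A S := fun hneg hpos =>
  let ⟨h, hh, hhA⟩ := hr hneg fun a ha => hSA (hpos a ha)
  ⟨h, hh, hhead h hh hhA⟩

theorem reductSat_inter_iff (hr : r.atoms ⊆ U) :
    r.ReductSat A S ↔ r.ReductSat (A ∩ U) (S ∩ U) := by
  have hbody : ∀ l ∈ r.body, l.atom ∈ U := fun l hl => hr (Or.inr ⟨l, hl, rfl⟩)
  refine imp_congr (forall₂_congr fun a ha => ?_) (imp_congr (forall₂_congr fun a ha => ?_)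
    (exists_congr fun h => and_congr_right fun hh => ?_))
  · have haU : a ∈ U := hbody _ ha
    simp [haU]
  · have haU : a ∈ U := hbody _ ha
    simp [haU]
  · simp [hr (Or.inl hh)]

theorem reductSat_iff_evaluated (hhead : ∀ h ∈ r.head, h ∉ U) (hr : r.AgreesOn U (A ∩ U))
    (hSU : S ∩ U = A ∩ U) :
    r.ReductSat A S ↔ (⟨r.head, removeU U r.body⟩ : GRule).ReductSat (A \ U) (S \ U) := by
  refine imp_congr (forall_congr' fun a => ?_) (imp_congr (forall_congr' fun a => ?_)
    (exists_congr fun h => and_congr_right fun hh => ?_))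
  · by_cases ha : a ∈ U
    · have hneg : GLit.neg a ∈ r.body → a ∉ A := fun hneg haA => hr.2 a hneg ha ⟨haA, ha⟩
      simpa [mem_removeU, GLit.atom, ha] using hneg
    · simp [mem_removeU, GLit.atom, ha]
  · by_cases ha : a ∈ U
    · have hpos : GLit.pos a ∈ r.body → a ∈ S := fun hpos => (hSU.symm ▸ hr.1 a hpos ha).1
      simpa [mem_removeU, GLit.atom, ha] using hpos
    · simp [mem_removeU, GLit.atom, ha]
  · simp [hhead h hh]

theorem reductSat_of_not_agreesOn (hSA : S ⊆ A) (hr : ¬ r.AgreesOn U (A ∩ U)) :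
    r.ReductSat A S := fun hneg hpos =>
  absurd ⟨fun a ha haU => ⟨hSA (hpos a ha), haU⟩, fun a ha _ haA => hneg a ha haA.1⟩ hr

end GRule

namespace splittingSet

variable {P : GProgram} {U : Set GAtom} (hU : splittingSet P U)
include hU

theorem head_notMem {r : GRule} (hr : r ∈ P \ bottomProg P U) {h : GAtom} (hh : h ∈ r.head) :
    h ∉ U := fun hhU => hr.2 ⟨hr.1, hU r hr.1 ⟨h, hh, hhU⟩⟩

theorem disjoint_gAtoms_topEval (X : Set GAtom) :
    Disjoint (gAtoms (topEval (P \ bottomProg P U) U X)) U := by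
  refine Set.disjoint_left.2 ?_
  rintro a ⟨_, ⟨r, hr, -, -, rfl⟩, hh | ⟨l, hl, rfl⟩⟩
  · exact hU.head_notMem hr hh
  · exact (mem_removeU.1 hl).2

variable {A : Set GAtom}

theorem forall_reductSat_of_bottom_of_topEval {S : Set GAtom} (hSA : S ⊆ A)
    (hSU : S ∩ U = A ∩ U) (hSB : ∀ r ∈ bottomProg P U, r.ReductSat A S)
    (hST : ∀ r ∈ topEval (P \ bottomProg P U) U (A ∩ U), r.ReductSat (A \ U) (S \ U)) :
    ∀ r ∈ P, r.ReductSat A S := by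
  intro r hr
  by_cases hrB : r ∈ bottomProg P U
  · exact hSB r hrB
  by_cases hagree : r.AgreesOn U (A ∩ U)
  · rw [GRule.reductSat_iff_evaluated (fun _ => hU.head_notMem ⟨hr, hrB⟩) hagree hSU]
    exact hST _ ⟨r, ⟨hr, hrB⟩, hagree.1, hagree.2, rfl⟩
  · exact GRule.reductSat_of_not_agreesOn hSA hagree

theorem isStableSet_bottom (hA : IsStableSet P A) : IsStableSet (bottomProg P U) (A ∩ U) := by
  refine ⟨fun r hr => (GRule.reductSat_inter_iff hr.2).1 (hA.1 r hr.1), fun S hSA hS => ?_⟩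
  have hSA' : S ∪ A \ U ⊆ A := Set.union_subset (hSA.trans Set.inter_subset_left) Set.sdiff_subset
  have hSU : (S ∪ A \ U) ∩ U = S := by
    ext a; have := @hSA a; simp only [Set.mem_union, Set.mem_inter_iff, Set.mem_sdiff] at *; tauto
  have hreduct : ∀ r ∈ P, r.ReductSat A (S ∪ A \ U) := by
    intro r hr
    by_cases hrB : r ∈ bottomProg P U
    · rw [GRule.reductSat_inter_iff hrB.2, hSU]
      exact hS r hrB
    · exact GRule.reductSat_of_reductSat_self (hA.1 r hr) hSA' fun h hh hhA =>
        Or.inr ⟨hhA, hU.head_notMem ⟨hr, hrB⟩ hh⟩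
  rw [← hSU, hA.2 _ hSA' hreduct]

theorem isStableSet_topEval (hA : IsStableSet P A) :
    IsStableSet (topEval (P \ bottomProg P U) U (A ∩ U)) (A \ U) := by
  refine ⟨?_, fun S hSA hS => ?_⟩
  · rintro _ ⟨r, hr, hpos, hneg, rfl⟩
    exact (GRule.reductSat_iff_evaluated (fun _ => hU.head_notMem hr) ⟨hpos, hneg⟩ rfl).1
      (hA.1 r hr.1)
  have hSA' : A ∩ U ∪ S ⊆ A := Set.union_subset Set.inter_subset_left (hSA.trans Set.sdiff_subset)
  have hSU : (A ∩ U ∪ S) ∩ U = A ∩ U := by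
    ext a; have := @hSA a; simp only [Set.mem_union, Set.mem_inter_iff, Set.mem_sdiff] at *; tauto
  have hSdiff : (A ∩ U ∪ S) \ U = S := by
    ext a; have := @hSA a; simp only [Set.mem_union, Set.mem_inter_iff, Set.mem_sdiff] at *; tauto
  have hreduct := hU.forall_reductSat_of_bottom_of_topEval hSA' hSU
    (fun r hr => GRule.reductSat_of_reductSat_self (hA.1 r hr.1) hSA' fun h hh hhA =>
      Or.inl ⟨hhA, hr.2 h (Or.inl hh)⟩)
    (by rwa [hSdiff])
  rw [← hSdiff, hA.2 _ hSA' hreduct]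

theorem isStableSet_of_bottom_of_topEval (hB : IsStableSet (bottomProg P U) (A ∩ U))
    (hT : IsStableSet (topEval (P \ bottomProg P U) U (A ∩ U)) (A \ U)) :
    IsStableSet P A := by
  refine ⟨hU.forall_reductSat_of_bottom_of_topEval subset_rfl rfl
    (fun r hr => (GRule.reductSat_inter_iff hr.2).2 (hB.1 r hr)) hT.1, fun S hSA hS => ?_⟩
  have hSU : S ∩ U = A ∩ U := hB.2 _ (Set.inter_subset_inter_left U hSA) fun r hr =>
    (GRule.reductSat_inter_iff hr.2).1 (hS r hr.1)
  have hSdiff : S \ U = A \ U := hT.2 _ (Set.sdiff_subset_sdiff_left hSA) <| by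
    rintro _ ⟨r, hr, hpos, hneg, rfl⟩
    exact (GRule.reductSat_iff_evaluated (fun _ => hU.head_notMem hr) ⟨hpos, hneg⟩ hSU).1
      (hS r hr.1)
  rw [← Set.inter_union_sdiff S U, hSU, hSdiff, Set.inter_union_sdiff]

theorem isStableSet_iff :
    IsStableSet P A ↔ IsStableSet (bottomProg P U) (A ∩ U) ∧
      IsStableSet (topEval (P \ bottomProg P U) U (A ∩ U)) (A \ U) :=
  ⟨fun hA => ⟨hU.isStableSet_bottom hA, hU.isStableSet_topEval hA⟩,
    fun ⟨hB, hT⟩ => hU.isStableSet_of_bottom_of_topEval hB hT⟩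

end splittingSet

end ASP

theorem statement9_general (P : GProgram)
    (U : Set GAtom) (hU : splittingSet P U)
    (I : Set GLit) (hI : IsInterp (gAtoms P) I)
    (A : Set GAtom) (hA : plus I = A) :
    IsStableG P I ↔
    ∃ X Y, X ⊆ U ∧ A = X ∪ Y ∧
      (∃ Ib, IsStableG (bottomProg P U) Ib ∧ plus Ib = X) ∧
      (∃ It, IsStableG (topEval (P \ bottomProg P U) U X) It ∧ plus It = Y) ∧
      X = A ∩ U := by
  simp only [exists_isStableG_iff]
  rw [isStableG_iff hI, hA, hU.isStableSet_iff]
  constructor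
  · rintro ⟨hB, hT⟩
    exact ⟨A ∩ U, A \ U, Set.inter_subset_right, (Set.inter_union_sdiff A U).symm, hB, hT, rfl⟩
  · rintro ⟨X, Y, hXU, rfl, hB, hT, hX⟩
    have hYU : Disjoint Y U := (hU.disjoint_gAtoms_topEval X).mono_left hT.subset_gAtoms
    have hY : (X ∪ Y) \ U = Y := by
      rw [Set.union_sdiff_distrib, Set.sdiff_eq_empty.2 hXU, Set.empty_union, hYU.sdiff_eq_left]
    rw [← hX, hY]
    exact ⟨hB, hT⟩

/-- splitting theorem for ground programs: if `U` is a splitting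
set for the ground program `P`, then an interpretation `I` whose set of true
atoms is `A` is a stable model of `P` iff `A = X ∪ Y`, where `X` is the set of
true atoms of a stable model of the bottom `b_U(P)`, `Y` is the set of true
atoms of a stable model of the partial evaluation
`e_U(P ∖ b_U(P), X)`, and `X = A ∩ U`. -/
theorem statement9 (P : GProgram) (hfin : P.Finite)
    (hrules : ∀ r ∈ P, r.head ≠ [] ∨ r.body ≠ [])
    (U : Set GAtom) (hU : splittingSet P U)
    (I : Set GLit) (hI : IsInterp (gAtoms P) I)
    (A : Set GAtom) (hA : plus I = A) :
    IsStableG P I ↔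
    ∃ X Y, X ⊆ U ∧ A = X ∪ Y ∧
      (∃ Ib, IsStableG (bottomProg P U) Ib ∧ plus Ib = X) ∧
      (∃ It, IsStableG (topEval (P \ bottomProg P U) U X) It ∧ plus It = Y) ∧
      X = A ∩ U :=
  statement9_general P U hU I hI A hA
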